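/- arXiv:2605.29727 — 2 statements merged into one kernel-verified Lean document; each statement's English description precedes it below -/
import Mathlib

section
/- Best-first expansion of a rooted tree with multiplicative path scores in [0,1] selects nodes in globally non-increasing score order: if node i_m is selected before node i_n, then ρ(i_m) ≥ ρ(i_n). -/
/-!
Consecutive selections already have non-increasing scores, which suffices by induction. If the
parent of the next node `sel (n + 1)` was the node `sel n` selected just before it, then its score
is at most its parent's, since weights lie in `[0, 1]`. Otherwise its parent was selected even
earlier, so `sel (n + 1)` was already available at step `n` and lost to `sel n` by maximality.
-/

/-- A candidate lattice: a rooted tree with multiplicative path scores, where each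
node multiplies its parent's score by a weight in [0,1], and the root has score 1. -/
structure ScoreTree (σ : Type) where
  root : σ
  parent : σ → σ
  depth : σ → ℕ
  weight : σ → ℝ
  score : σ → ℝ
  parent_root : parent root = root
  depth_root : depth root = 0
  depth_node : ∀ i, i ≠ root → depth i = depth (parent i) + 1
  weight_nonneg : ∀ i, 0 ≤ weight i
  weight_le_one : ∀ i, weight i ≤ 1
  score_root : score root = 1
  score_node : ∀ i, i ≠ root → score i = score (parent i) * weight i

namespace ScoreTree

variable {σ : Type} (T : ScoreTree σ)

theorem induction_on {P : σ → Prop} (root : P T.root)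
    (node : ∀ i, i ≠ T.root → P (T.parent i) → P i) (i : σ) : P i := by
  induction h : T.depth i using Nat.strong_induction_on generalizing i with
  | _ d ih =>
    by_cases hi : i = T.root
    · exact hi ▸ root
    · exact node i hi (ih _ (h ▸ T.depth_node i hi ▸ Nat.lt_succ_self _) _ rfl)

theorem score_nonneg (i : σ) : 0 ≤ T.score i := by
  induction i using T.induction_on with
  | root => rw [T.score_root]; exact zero_le_one
  | node i hi hp => rw [T.score_node i hi]; exact mul_nonneg hp (T.weight_nonneg i)

theorem score_le_score_parent (i : σ) : T.score i ≤ T.score (T.parent i) := by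
  by_cases hi : i = T.root
  · rw [hi, T.parent_root]
  · rw [T.score_node i hi]
    exact mul_le_of_le_one_right (T.score_nonneg _) (T.weight_le_one i)

theorem score_succ_le_of_bestFirst {sel : ℕ → σ} (hinj : Function.Injective sel)
    (havail : ∀ n, 0 < n → ∃ k < n, sel k = T.parent (sel n))
    (hmax : ∀ n, 0 < n → ∀ j, (∀ k < n, sel k ≠ j) → (∃ k < n, sel k = T.parent j) →
      T.score j ≤ T.score (sel n))
    (n : ℕ) : T.score (sel (n + 1)) ≤ T.score (sel n) := by
  obtain ⟨k, hk, hparent⟩ := havail (n + 1) n.succ_pos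
  rcases (Nat.lt_succ_iff.mp hk).lt_or_eq with hkn | rfl
  · have hunselected : ∀ l < n, sel l ≠ sel (n + 1) := fun l hl h => by
      have := hinj h
      omega
    exact hmax n (Nat.zero_lt_of_lt hkn) _ hunselected ⟨k, hkn, hparent⟩
  · exact hparent ▸ T.score_le_score_parent _

end ScoreTree

theorem stmt6_general {σ : Type} (T : ScoreTree σ) (sel : ℕ → σ)
    (hinj : Function.Injective sel)
    (havail : ∀ n, 0 < n → ∃ k < n, sel k = T.parent (sel n))
    (hmax : ∀ n, 0 < n → ∀ j, (∀ k < n, sel k ≠ j) → (∃ k < n, sel k = T.parent j) →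
      T.score j ≤ T.score (sel n))
    (m n : ℕ) (hmn : m ≤ n) :
    T.score (sel n) ≤ T.score (sel m) :=
  antitone_nat_of_succ_le (f := T.score ∘ sel) (T.score_succ_le_of_bestFirst hinj havail hmax) hmn

/-- Best-first expansion (start at the root, repeatedly add the available node of
maximal score, where a node is available if its parent has already been added)
selects nodes in globally non-increasing score order: if node sel m is selected
before sel n, then ρ(sel m) ≥ ρ(sel n). -/
theorem stmt6 {σ : Type} (T : ScoreTree σ) (sel : ℕ → σ)
    (hsel0 : sel 0 = T.root)
    (hinj : Function.Injective sel)
    (havail : ∀ n, 0 < n → ∃ k < n, sel k = T.parent (sel n))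
    (hmax : ∀ n, 0 < n → ∀ j, (∀ k < n, sel k ≠ j) → (∃ k < n, sel k = T.parent j) →
      T.score j ≤ T.score (sel n))
    (m n : ℕ) (hmn : m ≤ n) :
    T.score (sel n) ≤ T.score (sel m) :=
  stmt6_general T sel hinj havail hmax m n hmn
end

section
/- Let Â : {1,...,N_max} → ℝ be concave (in the discrete sense of non-increasing increments), non-decreasing, and nonnegative, and let C : {1,...,N_max} → ℝ be convex (non-decreasing increments) and strictly positive. Then S(N) = Â(N)/C(N) is unimodal on {1,...,N_max}. -/
/-!
Concavity of `A` and `A (k + 1) ≥ 0` give `A (k + 2) ≤ 2 A (k + 1) - A k`, and convexity of `C`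
gives `C (k + 2) ≥ 2 C (k + 1) - C k`. Cross-multiplying, a descent `S (k + 1) ≤ S k` of
`S = A / C` forces the next descent `S (k + 2) ≤ S (k + 1)`. Hence `S` rises strictly until its
first descent and never rises again afterwards.
-/

theorem div_le_div_of_concave_of_convex {a₀ a₁ a₂ c₀ c₁ c₂ : ℝ}
    (ha : a₂ - a₁ ≤ a₁ - a₀) (ha₁ : 0 ≤ a₁) (hc : c₁ - c₀ ≤ c₂ - c₁)
    (hc₀ : 0 < c₀) (hc₁ : 0 < c₁) (hc₂ : 0 < c₂) (h : a₁ / c₁ ≤ a₀ / c₀) :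
    a₂ / c₂ ≤ a₁ / c₁ := by
  rw [div_le_div_iff₀ hc₁ hc₀] at h
  rw [div_le_div_iff₀ hc₂ hc₁]
  calc a₂ * c₁ ≤ (2 * a₁ - a₀) * c₁ := by gcongr; linarith
    _ ≤ a₁ * (2 * c₁ - c₀) := by linarith
    _ ≤ a₁ * c₂ := by gcongr; linarith

section DescentPersists

variable {β : Type*} [LinearOrder β] {f : ℕ → β} {a b : ℕ}

theorem antitoneOn_Icc_of_descent_persists {p : ℕ} (hp : b ≤ p ∨ f (p + 1) ≤ f p)
    (hf : ∀ k, p ≤ k → k + 2 ≤ b → f (k + 1) ≤ f k → f (k + 2) ≤ f (k + 1)) :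
    AntitoneOn f (Set.Icc p b) := by
  have hstep : ∀ k, p ≤ k → k + 1 ≤ b → f (k + 1) ≤ f k := by
    intro k hpk hkb
    induction k, hpk using Nat.le_induction with
    | base => exact hp.resolve_left (by omega)
    | succ k hpk ih => exact hf k hpk hkb (ih (by omega))
  exact antitoneOn_of_add_one_le Set.ordConnected_Icc fun k _ hk hk₁ => hstep k hk.1 hk₁.2

theorem exists_monotoneOn_antitoneOn_Icc_of_descent_persists (hab : a ≤ b)
    (hf : ∀ k, a ≤ k → k + 2 ≤ b → f (k + 1) ≤ f k → f (k + 2) ≤ f (k + 1)) :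
    ∃ p ∈ Set.Icc a b, MonotoneOn f (Set.Icc a p) ∧ AntitoneOn f (Set.Icc p b) := by
  classical
  have hdesc : ∃ k, a ≤ k ∧ (b ≤ k ∨ f (k + 1) ≤ f k) := ⟨b, hab, Or.inl le_rfl⟩
  obtain ⟨hap, hp⟩ := Nat.find_spec hdesc
  refine ⟨Nat.find hdesc, ⟨hap, Nat.find_min' hdesc ⟨hab, Or.inl le_rfl⟩⟩, ?_,
    antitoneOn_Icc_of_descent_persists hp fun k hk => hf k (hap.trans hk)⟩
  refine monotoneOn_of_le_add_one Set.ordConnected_Icc fun k _ hk hk₁ => ?_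
  have hrise := Nat.find_min hdesc (m := k) hk₁.2
  simp only [not_and, not_or, not_le] at hrise
  exact (hrise hk.1).2.le

end DescentPersists

theorem stmt14_general (Nmax : ℕ) (hNmax : 1 ≤ Nmax) (A C : ℕ → ℝ)
    (hAconc : ∀ k, 1 ≤ k → k + 2 ≤ Nmax → A (k + 2) - A (k + 1) ≤ A (k + 1) - A k)
    (hA0 : ∀ k, 1 ≤ k → k ≤ Nmax → 0 ≤ A k)
    (hCconv : ∀ k, 1 ≤ k → k + 2 ≤ Nmax → C (k + 1) - C k ≤ C (k + 2) - C (k + 1))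
    (hC0 : ∀ k, 1 ≤ k → k ≤ Nmax → 0 < C k) :
    ∃ Nstar, 1 ≤ Nstar ∧ Nstar ≤ Nmax ∧
      (∀ m n, 1 ≤ m → m ≤ n → n ≤ Nstar → A m / C m ≤ A n / C n) ∧
      (∀ m n, Nstar ≤ m → m ≤ n → n ≤ Nmax → A n / C n ≤ A m / C m) := by
  obtain ⟨p, ⟨hp₁, hpN⟩, hmono, hanti⟩ :=
    exists_monotoneOn_antitoneOn_Icc_of_descent_persists (f := fun k => A k / C k) hNmax
      fun k hk hkN => div_le_div_of_concave_of_convex (hAconc k hk hkN)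
        (hA0 _ (by omega) (by omega)) (hCconv k hk hkN) (hC0 k hk (by omega))
        (hC0 _ (by omega) (by omega)) (hC0 _ (by omega) hkN)
  exact ⟨p, hp₁, hpN,
    fun m n hm hmn hn => hmono ⟨hm, hmn.trans hn⟩ ⟨hm.trans hmn, hn⟩ hmn,
    fun m n hm hmn hn => hanti ⟨hm, hmn.trans hn⟩ ⟨hm.trans hmn, hn⟩ hmn⟩

/-- If Â : {1,…,Nmax} → ℝ is discretely concave (non-increasing increments),
non-decreasing and nonnegative, and C : {1,…,Nmax} → ℝ is discretely convex
(non-decreasing increments) and strictly positive, then S(N) = Â(N)/C(N) is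
unimodal on {1,…,Nmax}: non-decreasing up to some N* and non-increasing after. -/
theorem stmt14 (Nmax : ℕ) (hNmax : 1 ≤ Nmax) (A C : ℕ → ℝ)
    (hAconc : ∀ k, 1 ≤ k → k + 2 ≤ Nmax → A (k + 2) - A (k + 1) ≤ A (k + 1) - A k)
    (hAmono : ∀ m n, 1 ≤ m → m ≤ n → n ≤ Nmax → A m ≤ A n)
    (hA0 : ∀ k, 1 ≤ k → k ≤ Nmax → 0 ≤ A k)
    (hCconv : ∀ k, 1 ≤ k → k + 2 ≤ Nmax → C (k + 1) - C k ≤ C (k + 2) - C (k + 1))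
    (hC0 : ∀ k, 1 ≤ k → k ≤ Nmax → 0 < C k) :
    ∃ Nstar, 1 ≤ Nstar ∧ Nstar ≤ Nmax ∧
      (∀ m n, 1 ≤ m → m ≤ n → n ≤ Nstar → A m / C m ≤ A n / C n) ∧
      (∀ m n, Nstar ≤ m → m ≤ n → n ≤ Nmax → A n / C n ≤ A m / C m) :=
  stmt14_general Nmax hNmax A C hAconc hA0 hCconv hC0
end
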